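/- Let X be a stationary process on a finite alphabet A satisfying concentration of measure at exponential rate. Then X satisfies the ergodic theorem at exponential rate: there is a constant C such that for every k ≥ 1, every h : A^k → [0,1] and every ε > 0 there is g_k(ε) > 0 with ℙ( | (1/(n−k+1)) Σ_{j=0}^{n−k} h(X_{j+1}, …, X_{j+k}) − E[h(X_1, …, X_k)] | > ε ) ≤ C e^{−n g_k(ε)} for all n ≥ k. -/

import Mathlib

open MeasureTheory ProbabilityTheory Filter ENNReal

namespace GT

/-- The set of pasts: `x i` represents the symbol `x_{-(i+1)}`. -/
abbrev Past (A : Type*) := ℕ → A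

variable {A : Type*} [Fintype A] [MeasurableSpace A]

/-- The past of a bi-infinite trajectory: `past ω i = ω (-(i+1))`. -/
def past (ω : ℤ → A) : Past A := fun i => ω (-((i : ℤ) + 1))

/-- The left shift on bi-infinite sequences. -/
def shift (ω : ℤ → A) : ℤ → A := fun n => ω (n + 1)

/-- Shift invariance (stationarity) of a measure on `A^ℤ`. -/
def ShiftInvariant (μ : Measure (ℤ → A)) : Prop := μ.map shift = μ

/-- `P` is a (measurable) probability kernel on the alphabet `A`. -/
def IsProbKernel (P : A → Past A → ℝ) : Prop :=
  (∀ a, Measurable (P a)) ∧ (∀ a x, 0 ≤ P a x) ∧ ∀ x, ∑ a, P a x = 1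

/-- `μ` is compatible with the kernel `P`: `P` is a regular version of the
conditional probabilities of `μ` given the past. -/
def Compatible (P : A → Past A → ℝ) (μ : Measure (ℤ → A)) : Prop :=
  ∀ (a : A) (B : Set (Past A)), MeasurableSet B →
    (μ {ω | ω 0 = a ∧ past ω ∈ B}).toReal = ∫ ω in past ⁻¹' B, P a (past ω) ∂μ

/-- A stationary chain compatible with `P`. -/
def StatChain (P : A → Past A → ℝ) (μ : Measure (ℤ → A)) : Prop :=
  IsProbabilityMeasure μ ∧ ShiftInvariant μ ∧ Compatible P μ

/-- The continuity rate (variation) of order `k` of the kernel `P`. -/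
noncomputable def varRate (P : A → Past A → ℝ) (k : ℕ) : ℝ :=
  sSup {d | ∃ (b : A) (x y : Past A), (∀ i < k, x i = y i) ∧ d = |P b x - P b y|}

/-- A kernel is continuous if its continuity rate tends to `0`. -/
def ContinuousKernel (P : A → Past A → ℝ) : Prop :=
  Tendsto (varRate P) atTop (nhds 0)

/-- Strong non-nullness of a kernel. -/
def StronglyNonNull (P : A → Past A → ℝ) : Prop := ∃ δ > 0, ∀ a x, δ ≤ P a x

/-- A regular kernel: continuous and strongly non-null. -/
def RegularKernel (P : A → Past A → ℝ) : Prop := ContinuousKernel P ∧ StronglyNonNull P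

/-- Attractiveness: for every `a`, `x ↦ ∑_{b ≥ a} P(b|x)` is nondecreasing for the
coordinatewise partial order on pasts. -/
def Attractive [LinearOrder A] (P : A → Past A → ℝ) : Prop :=
  ∀ a : A, Monotone fun x : Past A => ∑ b ∈ Finset.univ.filter (fun b => a ≤ b), P b x

/-- The word `(X_1, …, X_n)` read off from a trajectory `ω`. -/
def word (n : ℕ) (ω : ℤ → A) : Fin n → A := fun j => ω (((j : ℕ) : ℤ) + 1)

/-- `δ_j f`: the oscillation of `f` along the `j`-th coordinate. -/
noncomputable def deltaj {n : ℕ} (f : (Fin n → A) → ℝ) (j : Fin n) : ℝ :=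
  sSup {d | ∃ a b : Fin n → A, (∀ i, i ≠ j → a i = b i) ∧ d = |f a - f b|}

/-- `‖δf‖_{ℓ1}`. -/
noncomputable def delta1 {n : ℕ} (f : (Fin n → A) → ℝ) : ℝ := ∑ j, deltaj f j

/-- `‖δf‖_{ℓ2}²`. -/
noncomputable def delta2sq {n : ℕ} (f : (Fin n → A) → ℝ) : ℝ := ∑ j, (deltaj f j) ^ 2

/-- Concentration of measure at exponential rate for the stationary law `μ`. -/
def ConcExpRate (μ : Measure (ℤ → A)) : Prop :=
  ∃ (C : ℝ) (g : ℝ → ℝ → ℝ), (∀ ε t, 0 < ε → 0 < t → 0 < g ε t) ∧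
    ∀ (n : ℕ), 1 ≤ n → ∀ (f : (Fin n → A) → ℝ) (ε : ℝ), 0 < ε →
      (μ {ω | ε < |f (word n ω) - ∫ ω', f (word n ω') ∂μ|}).toReal ≤
        C * Real.exp (-(g ε (delta1 f)) / delta2sq f)

/-- `ℙ` is the law of an i.i.d. process indexed by `ℤ`. -/
def IsIID {U : Type*} [MeasurableSpace U] (P : Measure (ℤ → U)) : Prop :=
  IsProbabilityMeasure P ∧
  iIndepFun (fun i (u : ℤ → U) => u i) P ∧
  ∀ i : ℤ, P.map (fun u => u i) = P.map (fun u => u 0)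

/-- A finitary coding of the process with law `ℙ` onto the process with law `μ`:
a shift-equivariant measurable factor map together with a.s. finite stopping
times `θ₁` (into the past) and `θ₂` (into the future) such that the zeroth output
symbol only depends on the coordinates in the window `[-θ₁, θ₂]`. -/
structure FinitaryCoding {U : Type*} [MeasurableSpace U]
    (μ : Measure (ℤ → A)) (P : Measure (ℤ → U)) where
  Φ : (ℤ → U) → ℤ → A
  meas : Measurable Φ
  equivariant : ∀ (u : ℤ → U) (n : ℤ), Φ (fun m => u (m + 1)) n = Φ u (n + 1)
  map_eq : P.map Φ = μ
  θ₁ : (ℤ → U) → ℕ∞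
  θ₂ : (ℤ → U) → ℕ∞
  meas_theta : ∀ k l : ℕ∞, MeasurableSet {u | θ₁ u = k ∧ θ₂ u = l}
  finite_ae : P {u | θ₁ u = ⊤ ∨ θ₂ u = ⊤} = 0
  window : ∀ (k l : ℕ) (u v : ℤ → U),
      (∀ j : ℤ, -(k : ℤ) ≤ j → j ≤ (l : ℤ) → u j = v j) →
      θ₁ u = (k : ℕ∞) → θ₂ u = (l : ℕ∞) → θ₁ v = (k : ℕ∞) ∧ θ₂ v = (l : ℕ∞)
  localize : ∀ u v : ℤ → U,
      (∀ j : ℤ, ((j.natAbs : ℕ∞) ≤ if j < 0 then θ₁ u else θ₂ u) → u j = v j) →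
      Φ u 0 = Φ v 0

/-- The new past obtained by appending the freshly generated symbol `a`. -/
def consPast (a : A) (x : Past A) : Past A := fun i =>
  match i with
  | 0 => a
  | j + 1 => x j

/-- The probability that the fixed-past chain with past `x` produces the word `w`
(first element of `w` generated first). -/
noncomputable def wordProb (P : A → Past A → ℝ) : Past A → List A → ℝ
  | _, [] => 1
  | x, a :: w => P a x * wordProb P (consPast a x) w

/-- `ℙ(X_{j+1}^x … X_{j+|w|}^x = w)`: the law of the fixed-past chain shifted by `j`. -/
noncomputable def shiftedCylProb (P : A → Past A → ℝ) (x : Past A) (j : ℕ) (w : List A) : ℝ :=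
  ∑ u : Fin j → A, wordProb P x (List.ofFn u ++ w)

/-- The cylinder set `{ω : ω_1 … ω_n = w}` (coordinates `1, …, |w|`). -/
def cylFrom1 (w : List A) : Set (ℤ → A) :=
  {ω | ∀ i : Fin w.length, ω (((i : ℕ) : ℤ) + 1) = w.get i}


variable {A : Type*} [Fintype A] [MeasurableSpace A]

/-- The word `(X_{j+1}, …, X_{j+k})` read off from a trajectory. -/
def wordAt (j : ℤ) (k : ℕ) (ω : ℤ → A) : Fin k → A := fun i => ω (j + (i : ℕ) + 1)

/-- The ergodic theorem holds at exponential rate for `μ`. -/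
def ErgodicExpRate (μ : Measure (ℤ → A)) : Prop :=
  ∃ C : ℝ, ∀ (k : ℕ), 1 ≤ k → ∀ h : (Fin k → A) → ℝ,
    (∀ w, h w ∈ Set.Icc (0 : ℝ) 1) → ∀ ε : ℝ, 0 < ε → ∃ g : ℝ, 0 < g ∧
      ∀ n : ℕ, k ≤ n →
        (μ {ω | ε < |(1 / ((n : ℝ) - k + 1)) *
              ∑ j ∈ Finset.range (n - k + 1), h (wordAt (j : ℤ) k ω) -
            ∫ ω', h (word k ω') ∂μ|}).toReal ≤ C * Real.exp (-(n : ℝ) * g)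

/-!
Split the window positions `0, …, n - k` into their residue classes mod `k`. Windows in one
class are disjoint, so the class average `F` of `h` is a function of `(X_1, …, X_n)` with
`‖δF‖_{ℓ1} = ‖δh‖_{ℓ1}` and `‖δF‖_{ℓ2}² = ‖δh‖_{ℓ2}² / m`, `m ≈ n / k` the class size; by
stationarity `F` has the same mean as `h (X_1, …, X_k)`. Concentration therefore bounds each
class deviation by `C exp (-m g(ε, ‖δh‖_{ℓ1}) / ‖δh‖_{ℓ2}²)`, and the ergodic average is a convex
combination of the class averages. Shrinking the rate absorbs the finitely many small `n`, so
the constant in front can be taken to be `2`, independently of `k`, `h` and `ε`.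
-/

open Finset

section Oscillation

variable {A ι : Type*} {n k : ℕ}

lemma deltaj_nonneg (f : (Fin n → A) → ℝ) (j : Fin n) : 0 ≤ deltaj f j :=
  Real.sSup_nonneg (by rintro _ ⟨a, b, -, rfl⟩; exact abs_nonneg _)

lemma abs_sub_le_deltaj [Finite A] (f : (Fin n → A) → ℝ) {j : Fin n} {a b : Fin n → A}
    (hab : ∀ i, i ≠ j → a i = b i) : |f a - f b| ≤ deltaj f j := by
  refine le_csSup (Set.Finite.bddAbove ?_) ⟨a, b, hab, rfl⟩
  refine (Set.finite_range fun p : (Fin n → A) × (Fin n → A) => |f p.1 - f p.2|).subset ?_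
  rintro _ ⟨a, b, -, rfl⟩
  exact ⟨(a, b), rfl⟩

lemma deltaj_const_add_mul (c b : ℝ) (f : (Fin n → A) → ℝ) (j : Fin n) :
    deltaj (fun w => c + b * f w) j = |b| * deltaj f j := by
  rw [deltaj, deltaj, ← smul_eq_mul, ← Real.sSup_smul_of_nonneg (abs_nonneg b)]
  congr 1
  ext d
  simp only [Set.mem_smul_set, smul_eq_mul]
  have hsub : ∀ x y : Fin n → A, |c + b * f x - (c + b * f y)| = |b| * |f x - f y| := by
    intro x y
    rw [← abs_mul]
    ring_nf
  constructor
  · rintro ⟨x, y, hxy, rfl⟩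
    exact ⟨_, ⟨x, y, hxy, rfl⟩, (hsub x y).symm⟩
  · rintro ⟨_, ⟨x, y, hxy, rfl⟩, rfl⟩
    exact ⟨x, y, hxy, (hsub x y).symm⟩

lemma delta1_const_add_mul (c b : ℝ) (f : (Fin n → A) → ℝ) :
    delta1 (fun w => c + b * f w) = |b| * delta1 f := by
  simp only [delta1, deltaj_const_add_mul, mul_sum]

lemma delta2sq_const_add_mul (c b : ℝ) (f : (Fin n → A) → ℝ) :
    delta2sq (fun w => c + b * f w) = b ^ 2 * delta2sq f := by
  simp only [delta2sq, deltaj_const_add_mul, mul_pow, sq_abs, mul_sum]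

lemma apply_eq_of_forall_eq_off {B : Type*} [Fintype ι] [DecidableEq ι] {f : (ι → A) → B}
    (hf : ∀ j (a b : ι → A), (∀ i, i ≠ j → a i = b i) → f a = f b) (x y : ι → A) :
    f x = f y := by
  have key : ∀ s : Finset ι, f (s.piecewise y x) = f x := by
    intro s
    induction s using Finset.induction_on with
    | empty => rw [piecewise_empty]
    | insert j s _ ih =>
      rw [piecewise_insert, ← ih]
      exact (hf j _ _ fun i hi => (Function.update_of_ne hi _ _).symm).symm
  simpa using (key univ).symm

lemma delta1_pos_and_delta2sq_pos [Finite A] {f : (Fin n → A) → ℝ}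
    (hf : ¬ ∀ x y, f x = f y) : 0 < delta1 f ∧ 0 < delta2sq f := by
  obtain ⟨j, hj⟩ : ∃ j, 0 < deltaj f j := by
    by_contra! hle
    refine hf (apply_eq_of_forall_eq_off fun j a b hab => ?_)
    have := (abs_sub_le_deltaj f hab).trans (hle j)
    rwa [abs_nonpos_iff, sub_eq_zero] at this
  exact ⟨sum_pos' (fun i _ => deltaj_nonneg f i) ⟨j, mem_univ j, hj⟩,
    sum_pos' (fun i _ => sq_nonneg _) ⟨j, mem_univ j, pow_pos hj 2⟩⟩

end Oscillation

section BlockSum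

variable {A ι : Type*} {n k : ℕ}

def blockSum (e : ι → Fin k ↪ Fin n) (P : Finset ι) (h : (Fin k → A) → ℝ) (w : Fin n → A) :
    ℝ :=
  ∑ j ∈ P, h (w ∘ e j)

variable {e : ι → Fin k ↪ Fin n} {P : Finset ι}
  (hdisj : (P : Set ι).PairwiseDisjoint fun j => Set.range (e j))
include hdisj

lemma blockSum_sub_blockSum {j : ι} (hj : j ∈ P) (h : (Fin k → A) → ℝ) {a b : Fin n → A}
    (hab : ∀ i ∉ Set.range (e j), a i = b i) :
    blockSum e P h a - blockSum e P h b = h (a ∘ e j) - h (b ∘ e j) := by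
  classical
  have hrest : ∀ j' ∈ P.erase j, h (a ∘ e j') = h (b ∘ e j') := by
    intro j' hj'
    congr 1
    funext p
    refine hab _ fun hmem => ?_
    exact Set.disjoint_left.mp (hdisj (mem_of_mem_erase hj') hj (ne_of_mem_erase hj'))
      ⟨p, rfl⟩ hmem
  rw [blockSum, blockSum, ← add_sum_erase _ _ hj, ← add_sum_erase _ _ hj, sum_congr rfl hrest]
  ring

lemma deltaj_blockSum_apply {j : ι} (hj : j ∈ P) (h : (Fin k → A) → ℝ) (p : Fin k) :
    deltaj (blockSum e P h) (e j p) = deltaj h p := by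
  classical
  unfold deltaj
  congr 1
  ext d
  constructor
  · rintro ⟨a, b, hab, rfl⟩
    refine ⟨a ∘ e j, b ∘ e j, fun p' hp' => hab _ ((e j).injective.ne hp'), ?_⟩
    rw [blockSum_sub_blockSum hdisj hj h fun i hi => hab i fun hip => hi ⟨p, hip.symm⟩]
  · rintro ⟨x, y, hxy, rfl⟩
    set c : Fin n → A := fun _ => x p
    have hoff : ∀ i ∉ Set.range (e j), Function.extend (e j) x c i = Function.extend (e j) y c i :=
      fun i hi => by
        rw [Function.extend_apply' _ _ _ hi, Function.extend_apply' _ _ _ hi]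
    refine ⟨Function.extend (e j) x c, Function.extend (e j) y c, fun i hi => ?_, ?_⟩
    · by_cases hmem : i ∈ Set.range (e j)
      · obtain ⟨p', rfl⟩ := hmem
        rw [(e j).injective.extend_apply, (e j).injective.extend_apply]
        exact hxy p' fun hp' => hi (congrArg (e j) hp')
      · exact hoff i hmem
    · rw [blockSum_sub_blockSum hdisj hj h hoff, Function.extend_comp (e j).injective,
        Function.extend_comp (e j).injective]

omit hdisj in
lemma deltaj_blockSum_of_notMem (h : (Fin k → A) → ℝ) {q : Fin n}
    (hq : ∀ j ∈ P, q ∉ Set.range (e j)) : deltaj (blockSum e P h) q = 0 := by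
  refine le_antisymm (Real.sSup_nonpos ?_) (deltaj_nonneg _ q)
  rintro _ ⟨a, b, hab, rfl⟩
  have hF : blockSum e P h a = blockSum e P h b := by
    refine sum_congr rfl fun j hj => congrArg h (funext fun p => hab _ fun hpq => ?_)
    exact hq j hj ⟨p, hpq⟩
  rw [hF, sub_self, abs_zero]

lemma sum_deltaj_blockSum (h : (Fin k → A) → ℝ) (φ : ℝ → ℝ) (hφ : φ 0 = 0) :
    ∑ q, φ (deltaj (blockSum e P h) q) = #P * ∑ p, φ (deltaj h p) := by
  classical
  set σ : ι × Fin k → Fin n := fun x => e x.1 x.2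
  have hσ : Set.InjOn σ ↑(P ×ˢ (univ : Finset (Fin k))) := by
    rintro ⟨j, p⟩ hjp ⟨j', p'⟩ hjp' heq
    simp only [coe_product, coe_univ, Set.mem_prod, mem_coe, Set.mem_univ, and_true] at hjp hjp'
    by_cases hjj : j = j'
    · subst hjj
      exact Prod.ext rfl ((e j).injective heq)
    · exact (Set.disjoint_left.mp (hdisj hjp hjp' hjj) ⟨p, rfl⟩ ⟨p', heq.symm⟩).elim
  have hzero : ∀ q ∈ univ, q ∉ (P ×ˢ univ).image σ → φ (deltaj (blockSum e P h) q) = 0 := by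
    intro q _ hq
    rw [deltaj_blockSum_of_notMem h fun j hj ⟨p, hp⟩ => hq (mem_image.mpr ⟨(j, p), by simp [hj], hp⟩),
      hφ]
  rw [← sum_subset (subset_univ _) hzero, sum_image hσ, sum_product]
  rw [sum_congr rfl fun j hj => sum_congr rfl fun p _ => by rw [deltaj_blockSum_apply hdisj hj h]]
  simp only [sum_const, nsmul_eq_mul]

lemma delta1_blockSum (h : (Fin k → A) → ℝ) : delta1 (blockSum e P h) = #P * delta1 h :=
  sum_deltaj_blockSum hdisj h id rfl

lemma delta2sq_blockSum (h : (Fin k → A) → ℝ) : delta2sq (blockSum e P h) = #P * delta2sq h :=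
  sum_deltaj_blockSum hdisj h (· ^ 2) (zero_pow two_ne_zero)

end BlockSum

section Averages

variable {ι κ : Type*}

lemma sum_sub_const_eq_card_mul (s : Finset ι) (f : ι → ℝ) (m : ℝ) :
    ∑ x ∈ s, (f x - m) = #s * ((#s : ℝ)⁻¹ * ∑ x ∈ s, f x - m) := by
  rcases s.eq_empty_or_nonempty with rfl | hs
  · simp
  · rw [sum_sub_distrib, sum_const, nsmul_eq_mul, mul_sub,
      mul_inv_cancel_left₀ (Nat.cast_ne_zero.mpr hs.card_pos.ne')]

lemma exists_lt_abs_fiber_avg_sub [DecidableEq κ] {s : Finset ι} (hs : s.Nonempty) {T : Finset κ}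
    {t : ι → κ} (ht : ∀ x ∈ s, t x ∈ T) (f : ι → ℝ) {m ε : ℝ}
    (hdev : ε < |(#s : ℝ)⁻¹ * ∑ x ∈ s, f x - m|) :
    ∃ i ∈ T, ε < |(#{x ∈ s | t x = i} : ℝ)⁻¹ * ∑ x ∈ s with t x = i, f x - m| := by
  by_contra! hle
  have hcard : (0 : ℝ) < #s := by exact_mod_cast hs.card_pos
  refine hdev.not_ge (le_of_mul_le_mul_left ?_ hcard)
  calc (#s : ℝ) * |(#s : ℝ)⁻¹ * ∑ x ∈ s, f x - m|
      = |∑ i ∈ T, ∑ x ∈ s with t x = i, (f x - m)| := by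
        rw [sum_fiberwise_of_maps_to ht, sum_sub_const_eq_card_mul, abs_mul, Nat.abs_cast]
    _ ≤ ∑ i ∈ T, |∑ x ∈ s with t x = i, (f x - m)| := abs_sum_le_sum_abs _ _
    _ ≤ ∑ i ∈ T, (#{x ∈ s | t x = i} : ℝ) * ε := by
        refine sum_le_sum fun i hi => ?_
        rw [sum_sub_const_eq_card_mul, abs_mul, Nat.abs_cast]
        exact mul_le_mul_of_nonneg_left (hle i hi) (Nat.cast_nonneg _)
    _ = #s * ε := by
        rw [← sum_mul, ← Nat.cast_sum, ← card_eq_sum_card_fiberwise ht]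

end Averages

section Windows

variable {A : Type*} {n k : ℕ}

/-- Indexed by `Fin (n + 1 - k)` rather than `Fin (n - k + 1)`: with truncated subtraction only
the former is empty when `n < k`. -/
def window (n k : ℕ) (j : Fin (n + 1 - k)) : Fin k ↪ Fin n :=
  ⟨fun p => ⟨j + p, by omega⟩, fun p p' hpp' => Fin.ext (by simpa using congrArg Fin.val hpp')⟩

def residueClass (M k i : ℕ) : Finset (Fin M) := {j | (j : ℕ) % k = i}

lemma div_le_card_residueClass (M : ℕ) {i : ℕ} (hi : i < k) : M / k ≤ #(residueClass M k i) := by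
  have hk : 0 < k := by omega
  have hlt : ∀ r : Fin (M / k), i + r * k < M := fun r => by
    have := (Nat.le_div_iff_mul_le hk).1 r.isLt
    rw [Nat.succ_mul] at this
    omega
  simpa using card_le_card_of_injOn (s := univ) (fun r : Fin (M / k) => (⟨i + r * k, hlt r⟩ : Fin M))
    (fun r _ => by simp [residueClass, Nat.add_mul_mod_self_right, Nat.mod_eq_of_lt hi])
    (fun r _ r' _ hrr' => Fin.ext (Nat.eq_of_mul_eq_mul_right hk (by simpa using hrr')))

lemma lt_card_residueClass_add_two_mul {i : ℕ} (hi : i < k) (hkn : k ≤ n) :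
    n < (#(residueClass (n + 1 - k) k i) + 2) * k := by
  have hk : 0 < k := by omega
  have h1 := Nat.lt_div_mul_add (a := n + 1 - k) hk
  have h2 := Nat.mul_le_mul_right k (div_le_card_residueClass (n + 1 - k) hi)
  rw [add_mul]
  omega

lemma eq_of_modEq_of_add_eq_add {j j' p p' : ℕ} (hmod : j ≡ j' [MOD k]) (hsum : j + p = j' + p')
    (hp : p < k) (hp' : p' < k) : j = j' := by
  rcases le_total j j' with hle | hle
  · have := Nat.eq_zero_of_dvd_of_lt ((Nat.modEq_iff_dvd' hle).1 hmod) (by omega)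
    omega
  · have := Nat.eq_zero_of_dvd_of_lt ((Nat.modEq_iff_dvd' hle).1 hmod.symm) (by omega)
    omega

lemma pairwiseDisjoint_window_residueClass (n k i : ℕ) :
    (residueClass (n + 1 - k) k i : Set (Fin (n + 1 - k))).PairwiseDisjoint
      fun j => Set.range (window n k j) := by
  intro j hj j' hj' hne
  replace hj : (j : ℕ) % k = i := by simpa [residueClass] using hj
  replace hj' : (j' : ℕ) % k = i := by simpa [residueClass] using hj'
  refine Set.disjoint_range_iff.mpr fun p p' heq => hne (Fin.ext ?_)
  exact eq_of_modEq_of_add_eq_add (hj.trans hj'.symm) (congrArg Fin.val heq) p.isLt p'.isLt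

lemma word_comp_window (ω : ℤ → A) (j : Fin (n + 1 - k)) :
    word n ω ∘ window n k j = wordAt (j : ℕ) k ω := by
  funext p
  show ω (((j + p : ℕ) : ℤ) + 1) = ω ((j : ℕ) + (p : ℕ) + 1)
  push_cast
  rfl

lemma shift_iterate_apply (j : ℕ) (ω : ℤ → A) (t : ℤ) : shift^[j] ω t = ω (t + j) := by
  induction j generalizing ω with
  | zero => simp
  | succ j ih =>
    rw [Function.iterate_succ_apply, ih, shift]
    push_cast
    ring_nf

lemma wordAt_eq_word_shift_iterate (j k : ℕ) (ω : ℤ → A) :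
    wordAt (j : ℤ) k ω = word k (shift^[j] ω) := by
  funext p
  rw [wordAt, word, shift_iterate_apply]
  ring_nf

noncomputable def empiricalMean (k : ℕ) (h : (Fin k → A) → ℝ) (n : ℕ) (ω : ℤ → A) : ℝ :=
  (1 / ((n : ℝ) - k + 1)) * ∑ j ∈ range (n - k + 1), h (wordAt (j : ℤ) k ω)

lemma empiricalMean_eq_avg_window (h : (Fin k → A) → ℝ) (hkn : k ≤ n) (ω : ℤ → A) :
    empiricalMean k h n ω =
      (#(univ : Finset (Fin (n + 1 - k))) : ℝ)⁻¹ * ∑ j, h (word n ω ∘ window n k j) := by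
  have hM : n - k + 1 = n + 1 - k := by omega
  simp only [empiricalMean, word_comp_window, card_univ, Fintype.card_fin, one_div, hM,
    Fin.sum_univ_eq_sum_range (fun j : ℕ => h (wordAt (j : ℤ) k ω))]
  rw [← hM, Nat.cast_add, Nat.cast_sub hkn, Nat.cast_one]

lemma empiricalMean_of_forall_eq {h : (Fin k → A) → ℝ} (hconst : ∀ x y, h x = h y) (hkn : k ≤ n)
    (ω : ℤ → A) (x : Fin k → A) : empiricalMean k h n ω = h x := by
  rw [empiricalMean_eq_avg_window h hkn, sum_congr rfl fun j _ => hconst _ x, sum_const,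
    nsmul_eq_mul, inv_mul_cancel_left₀ (by simp; omega)]

end Windows

section Stationarity

variable {A : Type*} [MeasurableSpace A] {μ : Measure (ℤ → A)}

lemma measurable_shift : Measurable (shift : (ℤ → A) → ℤ → A) :=
  measurable_pi_lambda _ fun t => measurable_pi_apply (t + 1)

lemma ShiftInvariant.measurePreserving_iterate (hstat : ShiftInvariant μ) (j : ℕ) :
    MeasurePreserving (shift^[j]) μ μ :=
  MeasurePreserving.iterate ⟨measurable_shift, hstat⟩ j

lemma ShiftInvariant.integrable_comp_iterate (hstat : ShiftInvariant μ) {G : (ℤ → A) → ℝ}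
    (hG : Integrable G μ) (j : ℕ) : Integrable (fun ω => G (shift^[j] ω)) μ :=
  (hstat.measurePreserving_iterate j).integrable_comp_of_integrable hG

lemma ShiftInvariant.integral_comp_iterate (hstat : ShiftInvariant μ) {G : (ℤ → A) → ℝ}
    (hG : AEStronglyMeasurable G μ) (j : ℕ) : ∫ ω, G (shift^[j] ω) ∂μ = ∫ ω, G ω ∂μ := by
  have hj := hstat.measurePreserving_iterate j
  rw [← integral_map hj.measurable.aemeasurable (by rwa [hj.map_eq]), hj.map_eq]

lemma ShiftInvariant.integral_avg_window (hstat : ShiftInvariant μ) {n k : ℕ}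
    {h : (Fin k → A) → ℝ} (hint : Integrable (fun ω => h (word k ω)) μ)
    {P : Finset (Fin (n + 1 - k))} (hP : P.Nonempty) :
    ∫ ω, (#P : ℝ)⁻¹ * blockSum (window n k) P h (word n ω) ∂μ = ∫ ω, h (word k ω) ∂μ := by
  simp only [blockSum, word_comp_window, wordAt_eq_word_shift_iterate]
  rw [integral_const_mul, integral_finsetSum P fun j _ => hstat.integrable_comp_iterate hint (j : ℕ),
    sum_congr (s₁ := P) rfl fun j _ => hstat.integral_comp_iterate hint.aestronglyMeasurable (j : ℕ),
    sum_const,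
    nsmul_eq_mul, inv_mul_cancel_left₀ (Nat.cast_ne_zero.mpr hP.card_pos.ne')]

end Stationarity

lemma tendsto_const_mul_exp_neg_mul_atTop (C : ℝ) {c : ℝ} (hc : 0 < c) :
    Tendsto (fun m : ℕ => C * Real.exp (-(c * m))) atTop (nhds 0) := by
  simpa using (Real.tendsto_exp_neg_atTop_nhds_zero.comp
    (tendsto_natCast_atTop_atTop.const_mul_atTop hc)).const_mul C

lemma exists_pos_forall_le_mul_exp_neg {p : ℕ → ℝ} {D K a : ℝ} (hD : 1 < D) (ha : 0 < a)
    (hp : ∀ n, p n ≤ 1) (hK : ∀ᶠ n in atTop, p n ≤ K * Real.exp (-(a * n))) :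
    ∃ r > 0, ∀ n : ℕ, p n ≤ D * Real.exp (-(n : ℝ) * r) := by
  obtain ⟨N, hN⟩ := eventually_atTop.1 (hK.and
    ((tendsto_const_mul_exp_neg_mul_atTop K (half_pos ha)).eventually_lt_const
      (show (0 : ℝ) < D by linarith)))
  have hlogD : 0 < Real.log D := Real.log_pos hD
  set r := min (a / 2) (Real.log D / (N + 1))
  have hr : 0 < r := lt_min (half_pos ha) (by positivity)
  refine ⟨r, hr, fun n => ?_⟩
  rcases le_or_gt N n with hn | hn
  · obtain ⟨hpK, hKD⟩ := hN n hn
    have hnr : (n : ℝ) * r ≤ a / 2 * n := by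
      rw [mul_comm]
      exact mul_le_mul_of_nonneg_right (min_le_left _ _) (Nat.cast_nonneg n)
    calc p n ≤ K * Real.exp (-(a * n)) := hpK
      _ = K * Real.exp (-(a / 2 * n)) * Real.exp (-(a / 2 * n)) := by
        rw [mul_assoc, ← Real.exp_add]
        ring_nf
      _ ≤ D * Real.exp (-(a / 2 * n)) := mul_le_mul_of_nonneg_right hKD.le (Real.exp_nonneg _)
      _ ≤ D * Real.exp (-(n : ℝ) * r) :=
        mul_le_mul_of_nonneg_left (Real.exp_le_exp.2 (by linarith)) (by linarith)
  · have hnr : (n : ℝ) * r ≤ Real.log D :=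
      calc (n : ℝ) * r ≤ (N + 1) * (Real.log D / (N + 1)) :=
            mul_le_mul (by exact_mod_cast hn.le.trans (Nat.le_succ N)) (min_le_right _ _) hr.le
              (by positivity)
        _ = Real.log D := by field_simp
    calc p n ≤ 1 := hp n
      _ = D * Real.exp (-Real.log D) := by
        rw [Real.exp_neg, Real.exp_log (by linarith), mul_inv_cancel₀ (by linarith)]
      _ ≤ D * Real.exp (-(n : ℝ) * r) :=
        mul_le_mul_of_nonneg_left (Real.exp_le_exp.2 (by linarith)) (by linarith)

lemma integrable_of_measureReal_lt_one {Ω : Type*} [MeasurableSpace Ω] {μ : Measure Ω}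
    [IsProbabilityMeasure μ] {f : Ω → ℝ} {ε : ℝ} (hf : ∀ ω, ε < |f ω|)
    (hdev : μ.real {ω | ε < |f ω - ∫ x, f x ∂μ|} < 1) : Integrable f μ := by
  by_contra hint
  simp [integral_undef hint, hf] at hdev

section Concentration

variable {A : Type*} [MeasurableSpace A] {μ : Measure (ℤ → A)} {C : ℝ} {g : ℝ → ℝ → ℝ}

def ConcentrationBound (μ : Measure (ℤ → A)) (C : ℝ) (g : ℝ → ℝ → ℝ) : Prop :=
  ∀ (n : ℕ), 1 ≤ n → ∀ (f : (Fin n → A) → ℝ) (ε : ℝ), 0 < ε →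
    (μ {ω | ε < |f (word n ω) - ∫ ω', f (word n ω') ∂μ|}).toReal ≤
      C * Real.exp (-(g ε (delta1 f)) / delta2sq f)

lemma ConcentrationBound.measureReal_lt_abs_avg_sub_le (hC : ConcentrationBound μ C g)
    {ι : Type*} {k n : ℕ} {e : ι → Fin k ↪ Fin n} {P : Finset ι}
    (hdisj : (P : Set ι).PairwiseDisjoint fun j => Set.range (e j)) (hP : P.Nonempty)
    (hn : 1 ≤ n) (b : ℝ) (h : (Fin k → A) → ℝ) {ε : ℝ} (hε : 0 < ε) :
    μ.real {ω | ε < |b + (#P : ℝ)⁻¹ * blockSum e P h (word n ω) -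
        ∫ ω', b + (#P : ℝ)⁻¹ * blockSum e P h (word n ω') ∂μ|} ≤
      C * Real.exp (-(g ε (delta1 h) / delta2sq h * #P)) := by
  have hP0 : (#P : ℝ) ≠ 0 := Nat.cast_ne_zero.mpr hP.card_pos.ne'
  have hbound := hC n hn (fun w => b + (#P : ℝ)⁻¹ * blockSum e P h w) ε hε
  rw [delta1_const_add_mul, delta2sq_const_add_mul, delta1_blockSum hdisj,
    delta2sq_blockSum hdisj, abs_inv, Nat.abs_cast, inv_mul_cancel_left₀ hP0, sq,
    mul_assoc, inv_mul_cancel_left₀ hP0] at hbound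
  refine hbound.trans_eq (congrArg (fun t => C * Real.exp t) ?_)
  simp only [div_eq_mul_inv, mul_inv, inv_inv]
  ring

lemma ConcentrationBound.integrable_blockSum [IsProbabilityMeasure μ]
    (hC : ConcentrationBound μ C g) {ι : Type*} {k n : ℕ} {e : ι → Fin k ↪ Fin n}
    {P : Finset ι} (hdisj : (P : Set ι).PairwiseDisjoint fun j => Set.range (e j))
    (hP : P.Nonempty) (hn : 1 ≤ n) {h : (Fin k → A) → ℝ} (hh : ∀ w, 0 ≤ h w)
    (hsmall : C * Real.exp (-(g (1 / 2) (delta1 h) / delta2sq h * #P)) < 1) :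
    Integrable (fun ω => blockSum e P h (word n ω)) μ := by
  have hf : Integrable (fun ω => 1 + (#P : ℝ)⁻¹ * blockSum e P h (word n ω)) μ := by
    refine integrable_of_measureReal_lt_one (ε := 1 / 2) (fun ω => ?_)
      ((hC.measureReal_lt_abs_avg_sub_le hdisj hP hn 1 h one_half_pos).trans_lt hsmall)
    have : 0 ≤ (#P : ℝ)⁻¹ * blockSum e P h (word n ω) :=
      mul_nonneg (by positivity) (sum_nonneg fun j _ => hh _)
    rw [abs_of_nonneg (by linarith)]
    linarith
  refine ((hf.sub (integrable_const 1)).const_mul (#P : ℝ)).congr (ae_of_all _ fun ω => ?_)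
  simp only [Pi.sub_apply, add_sub_cancel_left]
  exact mul_inv_cancel_left₀ (Nat.cast_ne_zero.mpr hP.card_pos.ne') _

/-- `A` carries an arbitrary σ-algebra, so this is not automatic. If `1 + F`, with `F ≥ 0` an
average of `h` over many disjoint windows, were not integrable, its integral would be `0`, and
concentration would put `1 + F` within `1 / 2` of `0` with positive probability. -/
lemma ConcentrationBound.integrable_comp_word [IsProbabilityMeasure μ]
    (hC : ConcentrationBound μ C g) {k : ℕ} (hk : 0 < k) {h : (Fin k → A) → ℝ}
    (hh : ∀ w, 0 ≤ h w) (hc : 0 < g (1 / 2) (delta1 h) / delta2sq h) :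
    Integrable (fun ω => h (word k ω)) μ := by
  obtain ⟨R, hR⟩ := eventually_atTop.1
    ((tendsto_const_mul_exp_neg_mul_atTop C hc).eventually_lt_const one_pos)
  obtain ⟨n, hn⟩ : ∃ n, n = (R + 3) * k := ⟨_, rfl⟩
  have hkn : k ≤ n := hn ▸ Nat.le_mul_of_pos_left k (by omega)
  have h0 : (⟨0, by omega⟩ : Fin (n + 1 - k)) ∈ residueClass (n + 1 - k) k 0 := by
    simp [residueClass]
  have hcard := lt_card_residueClass_add_two_mul hk hkn
  have hdisj := pairwiseDisjoint_window_residueClass n k 0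
  generalize residueClass (n + 1 - k) k 0 = P at h0 hcard hdisj
  have hcard : R + 2 ≤ #P := by
    have := Nat.lt_of_mul_lt_mul_right (lt_of_eq_of_lt hn.symm hcard)
    omega
  have hint₀ := hC.integrable_blockSum hdisj ⟨_, h0⟩ (by omega) hh (hR _ (by omega))
  have hint₁ := hC.integrable_blockSum (hdisj.subset (coe_subset.2 (erase_subset _ _)))
    (card_pos.1 (by rw [card_erase_of_mem h0]; omega)) (by omega) hh
    (hR _ (by rw [card_erase_of_mem h0]; omega))
  refine (hint₀.sub hint₁).congr (ae_of_all _ fun ω => ?_)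
  simp only [Pi.sub_apply, blockSum, sum_erase_eq_sub h0, _root_.sub_sub_cancel, word_comp_window,
    wordAt_eq_word_shift_iterate]
  rfl

lemma ConcentrationBound.measureReal_lt_abs_avg_window_sub_le [IsProbabilityMeasure μ]
    (hC : ConcentrationBound μ C g) (hstat : ShiftInvariant μ) {k n : ℕ}
    {h : (Fin k → A) → ℝ} (hint : Integrable (fun ω => h (word k ω)) μ)
    {P : Finset (Fin (n + 1 - k))}
    (hdisj : (P : Set _).PairwiseDisjoint fun j => Set.range (window n k j)) (hP : P.Nonempty)
    (hn : 1 ≤ n) {ε : ℝ} (hε : 0 < ε) :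
    μ.real {ω | ε < |(#P : ℝ)⁻¹ * blockSum (window n k) P h (word n ω) -
        ∫ ω', h (word k ω') ∂μ|} ≤ C * Real.exp (-(g ε (delta1 h) / delta2sq h * #P)) := by
  have hbound := hC.measureReal_lt_abs_avg_sub_le hdisj hP hn 0 h hε
  simp only [zero_add] at hbound
  rwa [hstat.integral_avg_window hint hP] at hbound

lemma mul_exp_neg_mul_le {C c : ℝ} (hc : 0 ≤ c) {k m n : ℕ} (hk : 0 < k) (hnm : n < (m + 2) * k) :
    C * Real.exp (-(c * m)) ≤ max C 0 * Real.exp (2 * c) * Real.exp (-(c / k * n)) := by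
  have hm : (n : ℝ) / k - 2 ≤ m := by
    rw [sub_le_iff_le_add, div_le_iff₀ (by positivity)]
    exact_mod_cast hnm.le
  have hexp : -(c * m) ≤ 2 * c + -(c / k * n) := by
    have := mul_le_mul_of_nonneg_left hm hc
    rw [mul_sub, mul_div_assoc'] at this
    rw [div_mul_eq_mul_div]
    linarith
  calc C * Real.exp (-(c * m)) ≤ max C 0 * Real.exp (-(c * m)) :=
        mul_le_mul_of_nonneg_right (le_max_left _ _) (Real.exp_nonneg _)
    _ ≤ max C 0 * Real.exp (2 * c + -(c / k * n)) :=
        mul_le_mul_of_nonneg_left (Real.exp_le_exp.2 hexp) (le_max_right _ _)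
    _ = _ := by rw [Real.exp_add, mul_assoc]

lemma setOf_lt_abs_empiricalMean_sub_eq_empty [IsProbabilityMeasure μ] {k n : ℕ}
    {h : (Fin k → A) → ℝ} (hconst : ∀ x y, h x = h y) (hkn : k ≤ n) {ε : ℝ} (hε : 0 ≤ ε) :
    {ω | ε < |empiricalMean k h n ω - ∫ ω', h (word k ω') ∂μ|} = ∅ := by
  refine Set.eq_empty_of_forall_notMem fun ω (hω : ε < |empiricalMean k h n ω - _|) =>
    hε.not_gt ?_
  rwa [empiricalMean_of_forall_eq hconst hkn ω (word k ω),
    show (fun ω' => h (word k ω')) = fun _ => h (word k ω) from funext fun _ => hconst _ _,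
    integral_const, probReal_univ, one_smul, sub_self, abs_zero] at hω

lemma ConcentrationBound.measureReal_lt_abs_empiricalMean_sub_le [IsProbabilityMeasure μ]
    (hC : ConcentrationBound μ C g) (hstat : ShiftInvariant μ) {k : ℕ} (hk : 0 < k)
    {h : (Fin k → A) → ℝ} (hint : Integrable (fun ω => h (word k ω)) μ) {ε : ℝ} (hε : 0 < ε)
    (hc : 0 ≤ g ε (delta1 h) / delta2sq h) {n : ℕ} (hkn : 2 * k ≤ n) :
    μ.real {ω | ε < |empiricalMean k h n ω - ∫ ω', h (word k ω') ∂μ|} ≤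
      k * max C 0 * Real.exp (2 * (g ε (delta1 h) / delta2sq h)) *
        Real.exp (-(g ε (delta1 h) / delta2sq h / k * n)) := by
  have : Nonempty (Fin (n + 1 - k)) := ⟨⟨0, by omega⟩⟩
  have hincl : {ω | ε < |empiricalMean k h n ω - ∫ ω', h (word k ω') ∂μ|} ⊆
      ⋃ i ∈ range k, {ω | ε < |(#(residueClass (n + 1 - k) k i) : ℝ)⁻¹ *
        blockSum (window n k) (residueClass (n + 1 - k) k i) h (word n ω) -
        ∫ ω', h (word k ω') ∂μ|} := by
    intro ω (hω : ε < |empiricalMean k h n ω - _|)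
    rw [empiricalMean_eq_avg_window h (by omega)] at hω
    obtain ⟨i, hi, hdev⟩ := exists_lt_abs_fiber_avg_sub univ_nonempty
      (t := fun j : Fin (n + 1 - k) => (j : ℕ) % k) (fun j _ => mem_range.2 (Nat.mod_lt _ hk)) _ hω
    exact Set.mem_iUnion₂.2 ⟨i, hi, hdev⟩
  refine (measureReal_mono hincl (measure_ne_top _ _)).trans
    ((measureReal_biUnion_finset_le _ _).trans ?_)
  calc _ ≤ ∑ _i ∈ range k, max C 0 * Real.exp (2 * (g ε (delta1 h) / delta2sq h)) *
        Real.exp (-(g ε (delta1 h) / delta2sq h / k * n)) := sum_le_sum fun i hi => ?_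
    _ = _ := by rw [sum_const, card_range, nsmul_eq_mul]; ring
  have hcard := lt_card_residueClass_add_two_mul (mem_range.1 hi) (by omega : k ≤ n)
  have hP : (residueClass (n + 1 - k) k i).Nonempty :=
    card_pos.1 (Nat.pos_of_ne_zero fun h0 => by rw [h0] at hcard; omega)
  exact (hC.measureReal_lt_abs_avg_window_sub_le hstat hint
    (pairwiseDisjoint_window_residueClass n k i) hP (by omega) hε).trans
    (mul_exp_neg_mul_le hc hk hcard)

end Concentration

/-- Concentration of measure at exponential rate implies the ergodic theorem at
exponential rate (inequality (2) implies inequality (3) in Gallo–Takahashi). -/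
theorem statement15 (μ : Measure (ℤ → A)) (hμ : IsProbabilityMeasure μ)
    (hstat : ShiftInvariant μ) (hconc : ConcExpRate μ) : ErgodicExpRate μ := by
  obtain ⟨C, g, hg, hC : ConcentrationBound μ C g⟩ := hconc
  refine ⟨2, fun k hk h hh ε hε => ?_⟩
  by_cases hconst : ∀ x y, h x = h y
  · refine ⟨1, one_pos, fun n hn => ?_⟩
    show μ.real {ω | ε < |empiricalMean k h n ω - ∫ ω', h (word k ω') ∂μ|} ≤ _
    rw [setOf_lt_abs_empiricalMean_sub_eq_empty hconst hn hε.le, measureReal_empty]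
    positivity
  obtain ⟨hδ1, hδ2⟩ := delta1_pos_and_delta2sq_pos hconst
  have hint := ConcentrationBound.integrable_comp_word hC hk (fun w => (hh w).1)
    (div_pos (hg _ _ one_half_pos hδ1) hδ2)
  have hc := div_pos (hg ε _ hε hδ1) hδ2
  obtain ⟨r, hr, hbound⟩ := exists_pos_forall_le_mul_exp_neg one_lt_two
    (div_pos hc (Nat.cast_pos.2 hk))
    (fun n => measureReal_le_one) (eventually_atTop.2
      ⟨2 * k, fun n => hC.measureReal_lt_abs_empiricalMean_sub_le hstat hk hint hε hc.le⟩)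
  exact ⟨r, hr, fun n _ => hbound n⟩

end GT
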